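/- Let N ∈ ℕ, let K : Fin N → Fin N → ℂ be a symmetric kernel (K j k = K k j), let c : Fin N → ℂ, and for t ∈ ℂ and a finite set α ⊆ Fin N write ρ_t(α) := ρ(t • c, α) for the symmetric-scheme Gaudin determinant with z_j = t · c_j. Then for every coefficient function F : Finset (Fin N) → ℂ and all L, l₀ ∈ ℂ, ∑_{α ⊆ univ} F(α) · ρ_{L − l₀}(univ \ α) = ∑_{α ⊆ univ} ( ∑_{β ⊆ α} F(β) · ρ_{−l₀}(α \ β) ) · ρ_L(univ \ α). (This is the paper's change of volume parameter from l = L − l₀ to L: C_HHL = (∏ 1/h̃(u_i,u_i)) ∑ F(α) ρ^s_l(ᾱ) = (∏ 1/h̃(u_i,u_i)) ∑ F^s(α) ρ^s_L(ᾱ) with F^s(α) = ∑_{β∪β̄=α} F(β) ρ^s_{−l₀}(β̄).) -/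

import Mathlib

open Finset

/-- The symmetric-scheme Gaudin determinant: the determinant of the square matrix
indexed by `α` whose `(j,j)` entry is `z j + ∑_{l ∈ α, l ≠ j} K j l` and whose
`(j,k)` entry for `j ≠ k` is `-(K j k)`. By convention it equals `1` on `α = ∅`. -/
noncomputable def gaudin {N : ℕ} (K : Fin N → Fin N → ℂ) (z : Fin N → ℂ)
    (α : Finset (Fin N)) : ℂ :=
  Matrix.det (Matrix.of fun j k : α =>
    if j = k then z j + ∑ l ∈ α.erase (j : Fin N), K j l else -K (j : Fin N) (k : Fin N))

/-! The Gaudin matrix is `diag z` plus the (directed) Laplacian of `K` on `α`, so its determinant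
is affine in each `z j`, with slope the Gaudin determinant on `α \ {j}` for `z` shifted by `K · j`.
This gives the convolution identity `ρ(x + y, γ) = ∑_{δ ⊆ γ} ρ(x, δ) ρ(y, γ \ δ)` by strong
induction on `γ`: the difference of the two sides does not change when a coordinate of `x` in `γ`
is set to zero, and once `x` vanishes on `γ` both sides equal `ρ(y, γ)`, the Laplacian being
singular. The theorem is this identity for `x = -l₀ c`, `y = L c`, summed against `F` and regrouped
over `α = β ∪ δ`. -/

theorem Matrix.det_updateRow_single_self {n R : Type*} [Fintype n] [DecidableEq n] [CommRing R]
    (A : Matrix n n R) (i : n) :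
    (A.updateRow i (Pi.single i 1)).det = (A.toSquareBlockProp (· ≠ i)).det := by
  have hrow : ∀ k, k = i → ∀ l, ¬l = i → A.updateRow i (Pi.single i 1) k l = 0 := by
    rintro k rfl l hl
    simp [hl]
  rw [twoBlockTriangular_det' _ _ hrow]
  convert one_mul (A.toSquareBlockProp (· ≠ i)).det using 2
  · convert det_eq_elem_of_subsingleton _ (⟨i, rfl⟩ : {k // k = i})
    simp [toSquareBlockProp]
  · congr 1
    ext a b
    simp [toSquareBlockProp, updateRow_ne a.2]

theorem Finset.apply_piecewise_zero {ι M β : Type*} [DecidableEq ι] [Zero M]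
    {f : (ι → M) → β} (s : Finset ι) (hf : ∀ j ∈ s, ∀ x, f (Function.update x j 0) = f x)
    (x : ι → M) : f (s.piecewise 0 x) = f x := by
  induction s using Finset.induction_on with
  | empty => rw [piecewise_empty]
  | insert j s hj ih =>
    rw [piecewise_insert, Pi.zero_apply, hf j (mem_insert_self j s),
      ih fun k hk => hf k (mem_insert_of_mem hk)]

theorem Finset.sum_powerset_sum_powerset_sdiff {ι M : Type*} [DecidableEq ι] [AddCommMonoid M]
    (s : Finset ι) (f : Finset ι → Finset ι → Finset ι → M) :
    ∑ α ∈ s.powerset, ∑ β ∈ α.powerset, f β (α \ β) (s \ α)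
      = ∑ β ∈ s.powerset, ∑ δ ∈ (s \ β).powerset, f β δ ((s \ β) \ δ) := by
  rw [sum_sigma', sum_sigma']
  refine sum_nbij' (fun p => ⟨p.2, p.1 \ p.2⟩) (fun q => ⟨q.1 ∪ q.2, q.1⟩) ?_ ?_ ?_ ?_ ?_
  all_goals simp only [mem_sigma, mem_powerset]
  · rintro ⟨α, β⟩ ⟨hα, hβ⟩
    exact ⟨hβ.trans hα, sdiff_subset_sdiff hα le_rfl⟩
  · rintro ⟨β, δ⟩ ⟨hβ, hδ⟩
    exact ⟨union_subset hβ (hδ.trans sdiff_subset), subset_union_left⟩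
  · rintro ⟨α, β⟩ ⟨-, hβ⟩
    rw [union_sdiff_of_subset hβ]
  · rintro ⟨β, δ⟩ ⟨-, hδ⟩
    rw [union_sdiff_cancel_left (disjoint_of_subset_right hδ disjoint_sdiff)]
  · rintro ⟨α, β⟩ ⟨-, hβ⟩
    rw [sdiff_sdiff_sdiff_cancel_right hβ]

section Gaudin

open Function

variable {N : ℕ} (K : Fin N → Fin N → ℂ)

noncomputable def gaudinMatrix (z : Fin N → ℂ) (α : Finset (Fin N)) : Matrix α α ℂ :=
  Matrix.of fun j k : α =>
    if j = k then z j + ∑ l ∈ α.erase (j : Fin N), K j l else -K (j : Fin N) (k : Fin N)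

theorem gaudin_eq_det (z : Fin N → ℂ) (α : Finset (Fin N)) :
    gaudin K z α = (gaudinMatrix K z α).det :=
  rfl

theorem gaudin_congr {z z' : Fin N → ℂ} {α : Finset (Fin N)} (h : ∀ j ∈ α, z j = z' j) :
    gaudin K z α = gaudin K z' α := by
  simp only [gaudin_eq_det, gaudinMatrix]
  congr 2 with j k
  split_ifs <;> simp [h j j.2]

theorem gaudin_empty (z : Fin N → ℂ) : gaudin K z ∅ = 1 :=
  Matrix.det_isEmpty

theorem gaudin_eq_zero {z : Fin N → ℂ} {α : Finset (Fin N)} (hα : α.Nonempty)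
    (hz : ∀ j ∈ α, z j = 0) : gaudin K z α = 0 := by
  rw [gaudin_eq_det, ← Matrix.exists_mulVec_eq_zero_iff]
  obtain ⟨i, hi⟩ := hα
  -- the rows of a Laplacian sum to zero
  refine ⟨fun _ => 1, fun h => one_ne_zero (congrFun h ⟨i, hi⟩), funext fun j => ?_⟩
  have hrow : ∀ k : α, gaudinMatrix K z α j k
      = if (k : Fin N) = j then ∑ l ∈ α.erase (j : Fin N), K j l else -K j k := by
    intro k
    simp only [gaudinMatrix, Matrix.of_apply, eq_comm (a := (k : Fin N)), Subtype.ext_iff,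
      hz j j.2, zero_add]
  simp only [Matrix.mulVec, dotProduct, mul_one, hrow, Pi.zero_apply]
  rw [sum_coe_sort α (fun k => if k = (j : Fin N) then ∑ l ∈ α.erase j, K j l else -K j k),
    ← add_sum_erase α _ j.2, if_pos rfl,
    sum_congr rfl fun l hl => if_neg (ne_of_mem_erase hl), sum_neg_distrib, add_neg_cancel]

theorem gaudinMatrix_eq_updateRow {z : Fin N → ℂ} {α : Finset (Fin N)} {j : Fin N}
    (hj : j ∈ α) :
    gaudinMatrix K z α = (gaudinMatrix K (update z j 0) α).updateRow ⟨j, hj⟩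
      (gaudinMatrix K (update z j 0) α ⟨j, hj⟩ + z j • Pi.single ⟨j, hj⟩ 1) := by
  ext a b
  rcases eq_or_ne a ⟨j, hj⟩ with rfl | ha
  · by_cases hb : (⟨j, hj⟩ : α) = b
    · subst hb; simp [gaudinMatrix, add_comm]
    · simp [gaudinMatrix, hb]
  · have ha' : (a : Fin N) ≠ j := fun h => ha (Subtype.ext h)
    simp [gaudinMatrix, Matrix.updateRow_ne ha, ha']

theorem det_gaudinMatrix_updateRow_single {z : Fin N → ℂ} {α : Finset (Fin N)} {j : Fin N}
    (hj : j ∈ α) :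
    ((gaudinMatrix K z α).updateRow ⟨j, hj⟩ (Pi.single ⟨j, hj⟩ 1)).det
      = gaudin K (fun k => z k + K k j) (α.erase j) := by
  let e : α.erase j ≃ {k : α // k ≠ ⟨j, hj⟩} :=
    { toFun := fun k => ⟨⟨k, mem_of_mem_erase k.2⟩, fun h => ne_of_mem_erase k.2 congr(($h).1)⟩
      invFun := fun k => ⟨k, mem_erase.2 ⟨fun h => k.2 (Subtype.ext h), k.1.2⟩⟩
      left_inv := fun _ => rfl
      right_inv := fun _ => rfl }
  rw [Matrix.det_updateRow_single_self, ← Matrix.det_submatrix_equiv_self e, gaudin_eq_det]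
  congr 1 with a b
  simp only [Matrix.submatrix_apply, Matrix.toSquareBlockProp_def, Matrix.of_apply,
    gaudinMatrix, e, Equiv.coe_fn_mk, Subtype.ext_iff]
  split_ifs
  · have hja : j ∈ α.erase a := mem_erase.2 ⟨fun h => ne_of_mem_erase a.2 h.symm, hj⟩
    rw [erase_right_comm, ← add_sum_erase _ _ hja]
    ring
  · rfl

theorem gaudin_insert {z : Fin N → ℂ} {s : Finset (Fin N)} {j : Fin N} (hj : j ∉ s) :
    gaudin K z (insert j s)
      = gaudin K (update z j 0) (insert j s) + z j * gaudin K (fun k => z k + K k j) s := by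
  rw [gaudin_eq_det, gaudinMatrix_eq_updateRow K (mem_insert_self j s), Matrix.det_updateRow_add,
    Matrix.updateRow_eq_self, Matrix.det_updateRow_smul, det_gaudinMatrix_updateRow_single,
    erase_insert hj]
  congr 2
  exact gaudin_congr K fun k hk => by rw [update_of_ne (ne_of_mem_of_not_mem hk hj)]

theorem gaudin_add_insert_sub_update_zero {s : Finset (Fin N)} {j : Fin N} (hj : j ∉ s)
    (x y : Fin N → ℂ) :
    gaudin K (x + y) (insert j s) - gaudin K (update x j 0 + y) (insert j s)
      = x j * gaudin K ((fun k => x k + K k j) + y) s := by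
  have hzero : update (update x j 0 + y) j 0 = update (x + y) j 0 := by
    ext k; rcases eq_or_ne k j with rfl | hk <;> simp [*]
  have hshift : gaudin K (fun k => (update x j 0 + y) k + K k j) s
      = gaudin K ((fun k => x k + K k j) + y) s :=
    gaudin_congr K fun k hk => by
      simp only [Pi.add_apply, update_of_ne (ne_of_mem_of_not_mem hk hj)]; ring
  have hshift' : (fun k => (x + y) k + K k j) = (fun k => x k + K k j) + y := by
    ext k; simp only [Pi.add_apply]; ring
  rw [gaudin_insert K hj (z := x + y), gaudin_insert K hj (z := update x j 0 + y), hzero,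
    hshift, hshift']
  simp only [Pi.add_apply, update_self, zero_add]
  ring

theorem sum_gaudin_mul_insert_sub_update_zero {s : Finset (Fin N)} {j : Fin N} (hj : j ∉ s)
    (x y : Fin N → ℂ) :
    ∑ δ ∈ (insert j s).powerset, gaudin K x δ * gaudin K y (insert j s \ δ)
        - ∑ δ ∈ (insert j s).powerset, gaudin K (update x j 0) δ * gaudin K y (insert j s \ δ)
      = x j * ∑ δ ∈ s.powerset, gaudin K (fun k => x k + K k j) δ * gaudin K y (s \ δ) := by
  rw [sum_powerset_insert hj, sum_powerset_insert hj, mul_sum]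
  have hfree : ∀ δ ∈ s.powerset, gaudin K (update x j 0) δ * gaudin K y (insert j s \ δ)
      = gaudin K x δ * gaudin K y (insert j s \ δ) := fun δ hδ => by
    rw [gaudin_congr K fun k hk =>
      update_of_ne (ne_of_mem_of_not_mem (mem_powerset.1 hδ hk) hj) _ _]
  have hins : ∀ δ ∈ s.powerset, gaudin K x (insert j δ) * gaudin K y (insert j s \ insert j δ)
      - gaudin K (update x j 0) (insert j δ) * gaudin K y (insert j s \ insert j δ)
      = x j * (gaudin K (fun k => x k + K k j) δ * gaudin K y (s \ δ)) := fun δ hδ => by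
    have hjδ : j ∉ δ := fun h => hj (mem_powerset.1 hδ h)
    rw [gaudin_insert K hjδ (z := x), insert_sdiff_insert, sdiff_insert_of_notMem hj]
    ring
  rw [sum_congr rfl hfree, ← sum_congr rfl hins, sum_sub_distrib]
  ring

theorem gaudin_add (x y : Fin N → ℂ) (γ : Finset (Fin N)) :
    gaudin K (x + y) γ = ∑ δ ∈ γ.powerset, gaudin K x δ * gaudin K y (γ \ δ) := by
  induction γ using Finset.strongInduction generalizing x with
  | H γ ih =>
    let defect : (Fin N → ℂ) → ℂ := fun x =>
      gaudin K (x + y) γ - ∑ δ ∈ γ.powerset, gaudin K x δ * gaudin K y (γ \ δ)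
    have hstep : ∀ j ∈ γ, ∀ x, defect (update x j 0) = defect x := by
      intro j hj x
      obtain ⟨s, hjs, rfl⟩ : ∃ s, j ∉ s ∧ γ = insert j s :=
        ⟨γ.erase j, notMem_erase j γ, (insert_erase hj).symm⟩
      simp only [defect]
      linear_combination sum_gaudin_mul_insert_sub_update_zero K hjs x y
        - gaudin_add_insert_sub_update_zero K hjs x y
        - x j * ih s (ssubset_insert hjs) (fun k => x k + K k j)
    have hlhs : gaudin K (γ.piecewise 0 x + y) γ = gaudin K y γ :=
      gaudin_congr K fun k hk => by simp [hk]
    have hrhs : ∑ δ ∈ γ.powerset, gaudin K (γ.piecewise 0 x) δ * gaudin K y (γ \ δ)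
        = gaudin K y γ := by
      rw [sum_eq_single_of_mem ∅ (empty_mem_powerset γ), gaudin_empty, one_mul, sdiff_empty]
      intro δ hδ hne
      rw [gaudin_eq_zero K (nonempty_iff_ne_empty.2 hne)
        fun k hk => piecewise_eq_of_mem _ _ _ (mem_powerset.1 hδ hk), zero_mul]
    rw [← sub_eq_zero]
    change defect x = 0
    rw [← apply_piecewise_zero γ hstep x]
    simp only [defect, hlhs, hrhs, sub_self]

end Gaudin

theorem gaudin_volume_shift_general {N : ℕ} (K : Fin N → Fin N → ℂ)
    (c : Fin N → ℂ)
    (F : Finset (Fin N) → ℂ) (L l₀ : ℂ) :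
    ∑ α ∈ (Finset.univ : Finset (Fin N)).powerset,
        F α * gaudin K ((L - l₀) • c) (Finset.univ \ α)
      = ∑ α ∈ (Finset.univ : Finset (Fin N)).powerset,
          (∑ β ∈ α.powerset, F β * gaudin K ((-l₀) • c) (α \ β))
            * gaudin K (L • c) (Finset.univ \ α) := by
  have hvolume : (L - l₀) • c = (-l₀) • c + L • c := by rw [← add_smul, neg_add_eq_sub]
  simp_rw [hvolume, gaudin_add, mul_sum, sum_mul, ← mul_assoc]
  exact (sum_powerset_sum_powerset_sdiff univ
    fun β δ γ => F β * gaudin K ((-l₀) • c) δ * gaudin K (L • c) γ).symm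

/-- Change of volume parameter from `l = L − l₀` to `L`: with `ρ_t(α) = ρ(t • c, α)`,
`∑_{α} F(α) ρ_{L−l₀}(univ \ α) = ∑_{α} (∑_{β ⊆ α} F(β) ρ_{−l₀}(α \ β)) ρ_L(univ \ α)`. -/
theorem gaudin_volume_shift {N : ℕ} (K : Fin N → Fin N → ℂ)
    (hK : ∀ j k, K j k = K k j) (c : Fin N → ℂ)
    (F : Finset (Fin N) → ℂ) (L l₀ : ℂ) :
    ∑ α ∈ (Finset.univ : Finset (Fin N)).powerset,
        F α * gaudin K ((L - l₀) • c) (Finset.univ \ α)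
      = ∑ α ∈ (Finset.univ : Finset (Fin N)).powerset,
          (∑ β ∈ α.powerset, F β * gaudin K ((-l₀) • c) (α \ β))
            * gaudin K (L • c) (Finset.univ \ α) :=
  gaudin_volume_shift_general K c F L l₀
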